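/- arXiv:1812.06933 — 4 statements merged into one kernel-verified Lean document; each statement's English description precedes it below -/
import Mathlib

section
/- Let A be an abelian category and let a : E ⟶ G and b : G ⟶ H be morphisms of objects of A. Regard [E ⟶ G], [E ⟶ H], [G ⟶ H] as cochain complexes concentrated in degrees −1 and 0 with differentials a, b∘a, b respectively. Then in the derived category D(A) there is a distinguished triangle [E ⟶ G] ⟶ [E ⟶ H] ⟶ [G ⟶ H] ⟶ [E ⟶ G][1], where the first morphism is (id_E, b) and the second is (a, id_H). -/
open CategoryTheory CategoryTheory.Limits CategoryTheory.Pretriangulated ZeroObject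

variable {C : Type*} [Category C] [Abelian C]

/-- The cochain complex `[X ⟶ Y]` concentrated in degrees `-1` and `0`,
with differential `f`. -/
noncomputable def twoTermComplex {X Y : C} (f : X ⟶ Y) : CochainComplex C ℤ where
  X i := if i = -1 then X else if i = 0 then Y else 0
  d i j :=
    if h : i = -1 ∧ j = 0 then
      eqToHom (by simp [h.1]) ≫ f ≫ eqToHom (by simp [h.2])
    else 0
  shape i j hij := by
    try dsimp only
    rw [dif_neg]
    rintro ⟨rfl, rfl⟩
    exact hij (by simp)
  d_comp_d' i j k hij hjk := by
    try dsimp only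
    by_cases h : i = -1 ∧ j = 0
    · rw [dif_neg (fun h' : j = -1 ∧ k = 0 => by rw [h.2] at h'; norm_num at h'), comp_zero]
    · rw [dif_neg h, zero_comp]

/-- Given a commutative square `f ≫ v = u ≫ g`, the induced chain map `(u, v)` between the
associated two-term complexes `[X ⟶ Y]` and `[X' ⟶ Y']`. -/
noncomputable def twoTermHom {X Y X' Y' : C} (f : X ⟶ Y) (g : X' ⟶ Y')
    (u : X ⟶ X') (v : Y ⟶ Y') (sq : f ≫ v = u ≫ g) :
    twoTermComplex f ⟶ twoTermComplex g where
  f i :=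
    if h1 : i = -1 then
      eqToHom (by subst h1; simp [twoTermComplex]) ≫ u ≫
        eqToHom (by subst h1; simp [twoTermComplex])
    else if h0 : i = 0 then
      eqToHom (by subst h0; simp [twoTermComplex]) ≫ v ≫
        eqToHom (by subst h0; simp [twoTermComplex])
    else 0
  comm' i j hij := by
    have hij' : i + 1 = j := by simpa using hij
    by_cases h1 : i = -1
    · subst h1
      have hj : j = 0 := by omega
      subst hj
      simp [twoTermComplex, sq]
      change 𝟙 _ ≫ u ≫ 𝟙 _ ≫ g = f ≫ 𝟙 _ ≫ v ≫ 𝟙 _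
      simp [sq]
    · by_cases h0 : i = 0
      · subst h0
        have hj : j = 1 := by omega
        subst hj
        simp [twoTermComplex]
        exact (comp_zero).symm
      · have hne : ¬((-1 : ℤ) = -1 ∧ j = 0) → True := fun _ => trivial
        have hij0 : ¬(i = -1 ∧ j = 0) := fun h => h1 h.1
        simp only [twoTermComplex, dif_neg h1, dif_neg h0, dif_neg hij0, zero_comp, comp_zero]

/-
`[X ⟶ Y]` is the mapping cone of `f` regarded as a morphism of complexes concentrated in
degree `0`, naturally in commutative squares. Applied to `a` and `b`, this identifies the
triangle of the statement with the image in `D(A)` of the triangle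
`cone a ⟶ cone (b ∘ a) ⟶ cone b ⟶ (cone a)[1]` attached to two composable morphisms of
complexes, which is distinguished already in the homotopy category.
-/

open CochainComplex HomComplex

local notation "single₀" => HomologicalComplex.single C (ComplexShape.up ℤ) (0 : ℤ)

section TwoTermComplex

variable {X Y : C} (f : X ⟶ Y)

noncomputable def twoTermComplexXNegOneIso : (twoTermComplex f).X (-1) ≅ X := Iso.refl _

noncomputable def twoTermComplexXZeroIso : (twoTermComplex f).X 0 ≅ Y := Iso.refl _

lemma isZero_twoTermComplex_X {n : ℤ} (h₁ : n ≠ -1) (h₀ : n ≠ 0) :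
    IsZero ((twoTermComplex f).X n) := by
  simpa [twoTermComplex, h₁, h₀] using isZero_zero C

lemma twoTermComplex_d_neg_one_zero :
    (twoTermComplex f).d (-1) 0 =
      (twoTermComplexXNegOneIso f).hom ≫ f ≫ (twoTermComplexXZeroIso f).inv := by
  simp [twoTermComplex, twoTermComplexXNegOneIso, twoTermComplexXZeroIso]

lemma twoTermComplex_d_eq_zero {i : ℤ} (hi : i ≠ -1) (j : ℤ) : (twoTermComplex f).d i j = 0 :=
  dif_neg fun h => hi h.1

variable {X' Y' : C} (g : X' ⟶ Y') (u : X ⟶ X') (v : Y ⟶ Y') (sq : f ≫ v = u ≫ g)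

lemma twoTermHom_f_neg_one : (twoTermHom f g u v sq).f (-1) =
    (twoTermComplexXNegOneIso f).hom ≫ u ≫ (twoTermComplexXNegOneIso g).inv :=
  rfl

lemma twoTermHom_f_zero : (twoTermHom f g u v sq).f 0 =
    (twoTermComplexXZeroIso f).hom ≫ v ≫ (twoTermComplexXZeroIso g).inv :=
  rfl

end TwoTermComplex

section MappingConeIso

variable {X Y : C} (f : X ⟶ Y)

/-! The next four (co)chains play for `twoTermComplex f` the roles of `mappingCone.inl`,
`mappingCone.inr`, `mappingCone.fst` and `mappingCone.snd` for the cone of `single₀.map f`. -/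

noncomputable def twoTermComplexInl : Cochain ((single₀).obj X) (twoTermComplex f) (-1) :=
  Cochain.single ((HomologicalComplex.singleObjXSelf _ 0 X).hom ≫
    (twoTermComplexXNegOneIso f).inv) (-1)

noncomputable def twoTermComplexInr : (single₀).obj Y ⟶ twoTermComplex f :=
  HomologicalComplex.mkHomFromSingle (twoTermComplexXZeroIso f).inv
    (fun _ _ => by rw [twoTermComplex_d_eq_zero f (by norm_num), comp_zero])

noncomputable def twoTermComplexFst : Cocycle (twoTermComplex f) ((single₀).obj X) 1 :=
  Cocycle.mk (Cochain.single ((twoTermComplexXNegOneIso f).hom ≫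
    (HomologicalComplex.singleObjXSelf _ 0 X).inv) 1) 2 (by norm_num) (by
      rw [Cochain.δ_single _ 1 2 (by norm_num) (-2) 1 (by norm_num) (by norm_num),
        twoTermComplex_d_eq_zero f (by norm_num), HomologicalComplex.single_obj_d]
      simp)

noncomputable def twoTermComplexSnd : Cochain (twoTermComplex f) ((single₀).obj Y) 0 :=
  Cochain.single ((twoTermComplexXZeroIso f).hom ≫
    (HomologicalComplex.singleObjXSelf _ 0 Y).inv) 0

lemma δ_twoTermComplexInl :
    δ (-1) 0 (twoTermComplexInl f) = Cochain.ofHom ((single₀).map f ≫ twoTermComplexInr f) := by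
  rw [twoTermComplexInl, Cochain.δ_single _ (-1) 0 (by norm_num) (-1) 0 (by norm_num) (by norm_num),
    HomologicalComplex.single_obj_d, zero_comp, Cochain.single_zero, smul_zero, add_zero]
  ext p
  by_cases hp : p = 0
  · subst hp
    simp [twoTermComplexInr, twoTermComplex_d_neg_one_zero, HomologicalComplex.single_map_f_self,
      HomologicalComplex.mkHomFromSingle_f]
  · exact (HomologicalComplex.isZero_single_obj_X _ _ _ _ hp).eq_of_src _ _

lemma δ_twoTermComplexSnd :
    δ 0 1 (twoTermComplexSnd f) +
      (twoTermComplexFst f).1.comp (Cochain.ofHom ((single₀).map f)) (add_zero 1) = 0 := by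
  rw [twoTermComplexSnd, Cochain.δ_single _ 0 1 (by norm_num) (-1) 1 (by norm_num) (by norm_num),
    HomologicalComplex.single_obj_d, comp_zero, Cochain.single_zero, zero_add]
  ext p q hpq
  by_cases hq : q = 0
  · obtain rfl : p = -1 := by omega
    subst hq
    simp [twoTermComplexFst, twoTermComplex_d_neg_one_zero,
      Cochain.comp_v _ _ (add_zero 1) (-1) 0 0 hpq (add_zero 0),
      HomologicalComplex.single_map_f_self, Units.neg_smul]
  · exact (HomologicalComplex.isZero_single_obj_X _ _ _ _ hq).eq_of_tgt _ _

/-- Taking `φ` only equal to `single₀.map f` lets this apply to `single₀.map a ≫ single₀.map b`,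
whose cone is the middle vertex of `mappingConeCompTriangle`. -/
noncomputable def mappingConeIsoTwoTermComplex {φ : (single₀).obj X ⟶ (single₀).obj Y}
    (hφ : (single₀).map f = φ) : mappingCone φ ≅ twoTermComplex f where
  hom := mappingCone.desc φ (twoTermComplexInl f) (twoTermComplexInr f)
    (hφ ▸ δ_twoTermComplexInl f)
  inv := mappingCone.lift φ (twoTermComplexFst f) (twoTermComplexSnd f)
    (hφ ▸ δ_twoTermComplexSnd f)
  hom_inv_id := by
    ext n
    by_cases hn₁ : n = -1
    · subst hn₁
      have hY := HomologicalComplex.isZero_single_obj_X (.up ℤ) 0 Y (-1) (by norm_num)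
      refine mappingCone.ext_from _ 0 (-1) (by norm_num)
        (mappingCone.ext_to _ (-1) 0 (by norm_num) ?_ (hY.eq_of_tgt _ _)) (hY.eq_of_src _ _)
      simp [twoTermComplexInl, twoTermComplexFst]
    by_cases hn₀ : n = 0
    · subst hn₀
      have hX := HomologicalComplex.isZero_single_obj_X (.up ℤ) 0 X 1 (by norm_num)
      refine mappingCone.ext_from _ 1 0 rfl (hX.eq_of_src _ _)
        (mappingCone.ext_to _ 0 1 rfl (hX.eq_of_tgt _ _) ?_)
      simp [twoTermComplexInr, twoTermComplexSnd, HomologicalComplex.mkHomFromSingle_f]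
    · refine IsZero.eq_of_src ?_ _ _
      rw [mappingCone.isZero_X_iff]
      exact ⟨HomologicalComplex.isZero_single_obj_X _ _ _ _ (by omega),
        HomologicalComplex.isZero_single_obj_X _ _ _ _ hn₀⟩
  inv_hom_id := by
    ext n
    rw [HomologicalComplex.comp_f, mappingCone.lift_desc_f _ _ _ _ _ _ _ n (n + 1) rfl]
    by_cases hn₁ : n = -1
    · subst hn₁
      simp [twoTermComplexInl, twoTermComplexFst, twoTermComplexSnd, Cochain.single_v_eq_zero]
    by_cases hn₀ : n = 0
    · subst hn₀
      simp [twoTermComplexInr, twoTermComplexFst, twoTermComplexSnd, Cochain.single_v_eq_zero,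
        HomologicalComplex.mkHomFromSingle_f]
    · exact (isZero_twoTermComplex_X f hn₁ hn₀).eq_of_src _ _

end MappingConeIso

lemma mappingCone_map_comp_mappingConeIsoTwoTermComplex_hom {X Y X' Y' : C} {f : X ⟶ Y}
    {g : X' ⟶ Y'} {u : X ⟶ X'} {v : Y ⟶ Y'} (sq : f ≫ v = u ≫ g)
    {φ : (single₀).obj X ⟶ (single₀).obj Y} {ψ : (single₀).obj X' ⟶ (single₀).obj Y'}
    {u' : (single₀).obj X ⟶ (single₀).obj X'} {v' : (single₀).obj Y ⟶ (single₀).obj Y'}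
    (hφ : (single₀).map f = φ) (hψ : (single₀).map g = ψ) (hu : (single₀).map u = u')
    (hv : (single₀).map v = v') (comm : φ ≫ v' = u' ≫ ψ) :
    mappingCone.map φ ψ u' v' comm ≫ (mappingConeIsoTwoTermComplex g hψ).hom =
      (mappingConeIsoTwoTermComplex f hφ).hom ≫ twoTermHom f g u v sq := by
  subst hu hv
  ext n
  by_cases hn₁ : n = -1
  · subst hn₁
    refine mappingCone.ext_from _ 0 (-1) (by norm_num) ?_
      ((HomologicalComplex.isZero_single_obj_X _ _ _ _ (by norm_num)).eq_of_src _ _)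
    simp [mappingCone.map, mappingConeIsoTwoTermComplex, twoTermComplexInl, twoTermHom_f_neg_one,
      HomologicalComplex.single_map_f_self]
  by_cases hn₀ : n = 0
  · subst hn₀
    refine mappingCone.ext_from _ 1 0 rfl
      ((HomologicalComplex.isZero_single_obj_X _ _ _ _ (by norm_num)).eq_of_src _ _) ?_
    simp [mappingCone.map, mappingConeIsoTwoTermComplex, twoTermComplexInr, twoTermHom_f_zero,
      HomologicalComplex.single_map_f_self, HomologicalComplex.mkHomFromSingle_f]
  · exact (isZero_twoTermComplex_X g hn₁ hn₀).eq_of_tgt _ _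

namespace CategoryTheory.Pretriangulated

variable {D : Type*} [Category D] [Preadditive D] [HasZeroObject D] [HasShift D ℤ]
  [∀ n : ℤ, (shiftFunctor D n).Additive] [Pretriangulated D]

lemma exists_distinguished_mk_of_iso {T : Triangle D} (hT : T ∈ distTriang D) {X₁ X₂ X₃ : D}
    (f : X₁ ⟶ X₂) (g : X₂ ⟶ X₃) (e₁ : T.obj₁ ≅ X₁) (e₂ : T.obj₂ ≅ X₂) (e₃ : T.obj₃ ≅ X₃)
    (comm₁ : T.mor₁ ≫ e₂.hom = e₁.hom ≫ f) (comm₂ : T.mor₂ ≫ e₃.hom = e₂.hom ≫ g) :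
    ∃ h : X₃ ⟶ X₁⟦(1 : ℤ)⟧, Triangle.mk f g h ∈ distTriang D :=
  ⟨e₃.inv ≫ T.mor₃ ≫ e₁.hom⟦(1 : ℤ)⟧', isomorphic_distinguished _ hT _
    (Triangle.isoMk _ _ e₁.symm e₂.symm e₃.symm
      (by
        show f ≫ e₂.inv = e₁.inv ≫ T.mor₁
        rw [Iso.eq_inv_comp, ← reassoc_of% comm₁, Iso.hom_inv_id, Category.comp_id])
      (by
        show g ≫ e₃.inv = e₂.inv ≫ T.mor₂
        rw [Iso.eq_inv_comp, ← reassoc_of% comm₂, Iso.hom_inv_id, Category.comp_id])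
      (by
        show (e₃.inv ≫ T.mor₃ ≫ e₁.hom⟦1⟧') ≫ e₁.inv⟦1⟧' = e₃.inv ≫ T.mor₃
        simp only [Category.assoc, ← Functor.map_comp, Iso.hom_inv_id, Functor.map_id,
          Category.comp_id]))⟩

end CategoryTheory.Pretriangulated

namespace DerivedCategory

variable [HasDerivedCategory C]

lemma mappingConeCompTriangle_distinguished {K L M : CochainComplex C ℤ} (f : K ⟶ L)
    (g : L ⟶ M) : Q.mapTriangle.obj (mappingConeCompTriangle f g) ∈ distTriang (DerivedCategory C) :=
  isomorphic_distinguished _ (Qh.map_distinguished _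
      (HomotopyCategory.mappingConeCompTriangleh_distinguished f g)) _
    ((Functor.mapTriangleIso (quotientCompQhIso C)).symm.app _ ≪≫
      (Functor.mapTriangleCompIso (HomotopyCategory.quotient C _) Qh).app _)

lemma exists_distinguished_mk_of_mappingConeCompTriangle_iso {K L M : CochainComplex C ℤ}
    (f : K ⟶ L) (g : L ⟶ M) {X₁ X₂ X₃ : CochainComplex C ℤ} (u : X₁ ⟶ X₂) (v : X₂ ⟶ X₃)
    (e₁ : mappingCone f ≅ X₁) (e₂ : mappingCone (f ≫ g) ≅ X₂) (e₃ : mappingCone g ≅ X₃)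
    (comm₁ : mappingCone.map f (f ≫ g) (𝟙 K) g (by simp) ≫ e₂.hom = e₁.hom ≫ u)
    (comm₂ : mappingCone.map (f ≫ g) g f (𝟙 M) (by simp) ≫ e₃.hom = e₂.hom ≫ v) :
    ∃ w : Q.obj X₃ ⟶ (Q.obj X₁)⟦(1 : ℤ)⟧,
      Triangle.mk (Q.map u) (Q.map v) w ∈ distTriang (DerivedCategory C) :=
  exists_distinguished_mk_of_iso (mappingConeCompTriangle_distinguished f g) _ _
    (Q.mapIso e₁) (Q.mapIso e₂) (Q.mapIso e₃)
    ((Q.map_comp _ _).symm.trans ((congrArg Q.map comm₁).trans (Q.map_comp _ _)))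
    ((Q.map_comp _ _).symm.trans ((congrArg Q.map comm₂).trans (Q.map_comp _ _)))

end DerivedCategory

/-- Let `A` be an abelian category and `a : E ⟶ G`, `b : G ⟶ H` morphisms
in `A`. Regarding `[E ⟶ G]`, `[E ⟶ H]`, `[G ⟶ H]` as cochain complexes concentrated in
degrees `-1` and `0` with differentials `a`, `b ∘ a`, `b`, there is a distinguished triangle
`[E ⟶ G] ⟶ [E ⟶ H] ⟶ [G ⟶ H] ⟶ [E ⟶ G][1]` in the derived category `D(A)`, whose first
morphism is `(𝟙 E, b)` and whose second morphism is `(a, 𝟙 H)`. -/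
theorem derived_triangle_of_composition [HasDerivedCategory C]
    {E G H : C} (a : E ⟶ G) (b : G ⟶ H) :
    ∃ w : DerivedCategory.Q.obj (twoTermComplex b) ⟶
        (DerivedCategory.Q.obj (twoTermComplex a))⟦(1 : ℤ)⟧,
      Triangle.mk
        (DerivedCategory.Q.map (twoTermHom a (a ≫ b) (𝟙 E) b (by simp)))
        (DerivedCategory.Q.map (twoTermHom (a ≫ b) b a (𝟙 H) (by simp)))
        w ∈ distTriang (DerivedCategory C) :=
  DerivedCategory.exists_distinguished_mk_of_mappingConeCompTriangle_iso
    ((single₀).map a) ((single₀).map b) _ _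
    (mappingConeIsoTwoTermComplex a rfl)
    (mappingConeIsoTwoTermComplex (a ≫ b) ((single₀).map_comp a b))
    (mappingConeIsoTwoTermComplex b rfl)
    (mappingCone_map_comp_mappingConeIsoTwoTermComplex_hom _ rfl ((single₀).map_comp a b)
      ((single₀).map_id E) rfl _)
    (mappingCone_map_comp_mappingConeIsoTwoTermComplex_hom _ ((single₀).map_comp a b) rfl rfl
      ((single₀).map_id H) _)
end

section
/- Let r, a, b be positive integers and let R = ℂ[u,v]/(uv). If there exists σ ∈ R with σ^r equal to the class of u^a − v^b in R, then r divides a and r divides b; in particular r divides a + b. -/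
/-! Restricting to either branch of the node is a ring map to `ℂ[X]` (kill `v`, resp. `u`),
and it sends `u ^ a - v ^ b` to a polynomial of degree `a`, resp. `b`. Degrees in `ℂ[X]` are
additive, so the degree of an `r`-th power is divisible by `r`. -/

namespace Polynomial

theorem dvd_natDegree_of_pow_eq {R : Type*} [Semiring R] [NoZeroDivisors R] {s p : R[X]} {r : ℕ}
    (h : s ^ r = p) : r ∣ p.natDegree :=
  ⟨s.natDegree, by rw [← h, natDegree_pow]⟩

section

variable {R : Type*} [Ring R] [Nontrivial R]

theorem natDegree_X_pow_sub_zero_pow (m n : ℕ) : (X ^ m - 0 ^ n : R[X]).natDegree = m := by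
  rw [← C_0, ← C_pow, natDegree_X_pow_sub_C]

theorem natDegree_zero_pow_sub_X_pow (m n : ℕ) : (0 ^ m - X ^ n : R[X]).natDegree = n := by
  rw [← neg_sub, natDegree_neg, natDegree_X_pow_sub_zero_pow]

end

end Polynomial

theorem Ideal.Quotient.dvd_natDegree_of_pow_eq_mk {A R : Type*} [CommRing A] [Semiring R]
    [NoZeroDivisors R] {I : Ideal A} (f : A →+* Polynomial R) (hf : I ≤ RingHom.ker f)
    {σ : A ⧸ I} {q : A} {r : ℕ} (h : σ ^ r = Ideal.Quotient.mk I q) : r ∣ (f q).natDegree :=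
  Polynomial.dvd_natDegree_of_pow_eq
    (s := Ideal.Quotient.lift I f (fun _ ha ↦ RingHom.mem_ker.1 (hf ha)) σ) <| by
    rw [← map_pow, h, Ideal.Quotient.lift_mk]

open MvPolynomial in
theorem node_rth_root_divisibility_general (r a b : ℕ)
    (σ : MvPolynomial (Fin 2) ℂ ⧸ Ideal.span {(X 0 * X 1 : MvPolynomial (Fin 2) ℂ)})
    (h : σ ^ r =
      Ideal.Quotient.mk (Ideal.span {(X 0 * X 1 : MvPolynomial (Fin 2) ℂ)})
        (X 0 ^ a - X 1 ^ b)) :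
    r ∣ a ∧ r ∣ b ∧ r ∣ (a + b) := by
  have hA : r ∣ a := by
    simpa [Polynomial.natDegree_X_pow_sub_zero_pow] using Ideal.Quotient.dvd_natDegree_of_pow_eq_mk
      (aeval ![(Polynomial.X : Polynomial ℂ), 0]).toRingHom (by simp) h
  have hB : r ∣ b := by
    simpa [Polynomial.natDegree_zero_pow_sub_X_pow] using Ideal.Quotient.dvd_natDegree_of_pow_eq_mk
      (aeval ![0, (Polynomial.X : Polynomial ℂ)]).toRingHom (by simp) h
  exact ⟨hA, hB, dvd_add hA hB⟩

open MvPolynomial in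
/-- Let `r, a, b` be positive integers and `R = ℂ[u,v]/(uv)`. If there exists
`σ ∈ R` with `σ ^ r` equal to the class of `u ^ a - v ^ b` in `R`, then `r ∣ a` and `r ∣ b`;
in particular `r ∣ (a + b)`. -/
theorem node_rth_root_divisibility (r a b : ℕ) (hr : 0 < r) (ha : 0 < a) (hb : 0 < b)
    (σ : MvPolynomial (Fin 2) ℂ ⧸ Ideal.span {(X 0 * X 1 : MvPolynomial (Fin 2) ℂ)})
    (h : σ ^ r =
      Ideal.Quotient.mk (Ideal.span {(X 0 * X 1 : MvPolynomial (Fin 2) ℂ)})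
        (X 0 ^ a - X 1 ^ b)) :
    r ∣ a ∧ r ∣ b ∧ r ∣ (a + b) :=
  node_rth_root_divisibility_general r a b σ h
end

section
/- Let R ⟶ S be a homomorphism of commutative rings, let θ : E₋₁ ⟶ E₀ and a : A ⟶ E₀ be R-module maps with a surjective, and let G = {(x, y) ∈ E₋₁ × A : θ(x) = a(y)} be the fibre product, with projections p : G ⟶ E₋₁ and θ̃ : G ⟶ A. Assume E₋₁ and E₀ are flat R-modules. Then the S-module map id_S ⊗ p induces an isomorphism ker(id_S ⊗ θ̃ : S ⊗_R G ⟶ S ⊗_R A) ≅ ker(id_S ⊗ θ : S ⊗_R E₋₁ ⟶ S ⊗_R E₀). -/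
/-!
Because `a` is surjective, `0 → G → E₁ × A → E₀ → 0` is a short exact sequence, and since `E₀`
is flat (`Tor₁(S, E₀) = 0`) it stays short exact after applying `S ⊗[R] -`. Hence `S ⊗ G` is again
the fibre product of `S ⊗ θ` and `S ⊗ a`, and in any fibre product the kernel of the second
projection is carried isomorphically onto `ker θ` by the first one: it consists of the pairs
`(x, 0)` with `θ x = 0`.
-/

open TensorProduct

/-- `(p, q)` identifies `G` with `{(x, y) : E₁ × A | θ x = a y}`. -/
def IsFibreProduct {R G E₁ E₀ A : Type*} [Ring R] [AddCommGroup G] [AddCommGroup E₁]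
    [AddCommGroup E₀] [AddCommGroup A] [Module R G] [Module R E₁] [Module R E₀] [Module R A]
    (θ : E₁ →ₗ[R] E₀) (a : A →ₗ[R] E₀) (p : G →ₗ[R] E₁) (q : G →ₗ[R] A) : Prop :=
  Function.Injective (p.prod q) ∧
    Function.Exact (p.prod q) (θ ∘ₗ LinearMap.fst R E₁ A - a ∘ₗ LinearMap.snd R E₁ A)

namespace IsFibreProduct

section Ring

variable {R G E₁ E₀ A : Type*} [Ring R] [AddCommGroup G] [AddCommGroup E₁]
    [AddCommGroup E₀] [AddCommGroup A] [Module R G] [Module R E₁] [Module R E₀] [Module R A]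
    {θ : E₁ →ₗ[R] E₀} {a : A →ₗ[R] E₀} {p : G →ₗ[R] E₁} {q : G →ₗ[R] A}

theorem comp_eq (h : IsFibreProduct θ a p q) (x : G) : θ (p x) = a (q x) :=
  sub_eq_zero.mp (h.2.apply_apply_eq_zero x)

theorem exists_kerEquiv (h : IsFibreProduct θ a p q) :
    ∃ e : LinearMap.ker q ≃ₗ[R] LinearMap.ker θ, ∀ x, (e x : E₁) = p x := by
  let φ : LinearMap.ker q →ₗ[R] LinearMap.ker θ :=
    p.restrict fun x (hx : q x = 0) ↦ show θ (p x) = 0 by rw [h.comp_eq, hx, map_zero]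
  have hφ : Function.Bijective φ := by
    refine ⟨fun x y hxy ↦ Subtype.ext (h.1 ?_), fun y ↦ ?_⟩
    · exact Prod.ext (congrArg Subtype.val hxy) (x.2.trans y.2.symm)
    · obtain ⟨g, hg⟩ := (h.2 (y.1, 0)).mp (by simp)
      exact ⟨⟨g, congrArg Prod.snd hg⟩, Subtype.ext (congrArg Prod.fst hg)⟩
  exact ⟨.ofBijective φ hφ, fun _ ↦ rfl⟩

end Ring

variable {R : Type*} [CommRing R] (S : Type*) [CommRing S] [Algebra R S]
    {G E₁ E₀ A : Type*} [AddCommGroup G] [AddCommGroup E₁]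
    [AddCommGroup E₀] [AddCommGroup A] [Module R G] [Module R E₁] [Module R E₀] [Module R A]
    {θ : E₁ →ₗ[R] E₀} {a : A →ₗ[R] E₀} {p : G →ₗ[R] E₁} {q : G →ₗ[R] A}

theorem baseChange [Module.Flat R E₀] (h : IsFibreProduct θ a p q)
    (ha : Function.Surjective a) :
    IsFibreProduct (θ.baseChange S) (a.baseChange S) (p.baseChange S) (q.baseChange S) := by
  set f := θ ∘ₗ LinearMap.fst R E₁ A - a ∘ₗ LinearMap.snd R E₁ A
  have hf : Function.Surjective f := fun z ↦
    let ⟨y, hy⟩ := ha (-z)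
    ⟨(0, y), by simp [f, hy]⟩
  have hprod : (p.baseChange S).prod (q.baseChange S) =
      (prodRight R S S E₁ A).toLinearMap ∘ₗ (p.prod q).baseChange S := by
    ext <;> rfl
  have hf_S : (θ.baseChange S ∘ₗ LinearMap.fst S _ _ - a.baseChange S ∘ₗ LinearMap.snd S _ _) ∘ₗ
      (prodRight R S S E₁ A).toLinearMap = f.baseChange S := by
    ext <;> simp [f]
  refine ⟨?_, ?_⟩
  · rw [hprod, LinearMap.coe_comp, LinearMap.baseChange_eq_ltensor]
    exact (prodRight R S S E₁ A).injective.comp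
      (LinearMap.lTensor_injective_of_exact_of_flat f hf _ h.1 h.2 S)
  · refine Function.Exact.of_ladder_linearEquiv_of_exact (e₁ := .refl S _) (e₃ := .refl S _)
      (by simpa using hprod) (by simpa using hf_S) ?_
    simpa only [LinearMap.baseChange_eq_ltensor] using lTensor_exact S h.2 hf

end IsFibreProduct

theorem isFibreProduct_ker {R E₁ E₀ A : Type*} [Ring R] [AddCommGroup E₁] [AddCommGroup E₀]
    [AddCommGroup A] [Module R E₁] [Module R E₀] [Module R A]
    (θ : E₁ →ₗ[R] E₀) (a : A →ₗ[R] E₀) :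
    let G := LinearMap.ker (θ ∘ₗ LinearMap.fst R E₁ A - a ∘ₗ LinearMap.snd R E₁ A)
    IsFibreProduct θ a (LinearMap.fst R E₁ A ∘ₗ G.subtype) (LinearMap.snd R E₁ A ∘ₗ G.subtype) :=
  ⟨Subtype.val_injective, LinearMap.exact_subtype_ker_map _⟩

theorem fibre_product_kernel_base_change_general {R S E₁ E₀ A : Type*} [CommRing R] [CommRing S]
    [Algebra R S]
    [AddCommGroup E₁] [AddCommGroup E₀] [AddCommGroup A]
    [Module R E₁] [Module R E₀] [Module R A]
    [Module.Flat R E₀]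
    (θ : E₁ →ₗ[R] E₀) (a : A →ₗ[R] E₀) (ha : Function.Surjective a) :
    let G : Submodule R (E₁ × A) :=
      LinearMap.ker (θ ∘ₗ LinearMap.fst R E₁ A - a ∘ₗ LinearMap.snd R E₁ A)
    let p : G →ₗ[R] E₁ := LinearMap.fst R E₁ A ∘ₗ G.subtype
    let θ' : G →ₗ[R] A := LinearMap.snd R E₁ A ∘ₗ G.subtype
    ∃ e : LinearMap.ker (θ'.baseChange S) ≃ₗ[S] LinearMap.ker (θ.baseChange S),
      ∀ x : LinearMap.ker (θ'.baseChange S), (e x : S ⊗[R] E₁) = p.baseChange S x.1 :=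
  ((isFibreProduct_ker θ a).baseChange S ha).exists_kerEquiv

/-- Let `R → S` be a homomorphism of commutative rings, `θ : E₋₁ → E₀` and
`a : A → E₀` be `R`-module maps with `a` surjective, and `G = {(x, y) ∈ E₋₁ × A : θ x = a y}`
the fibre product, with projections `p : G → E₋₁` and `θ̃ : G → A`. If `E₋₁` and `E₀` are flat
`R`-modules, then `id_S ⊗ p` induces an isomorphism
`ker (id_S ⊗ θ̃ : S ⊗ G → S ⊗ A) ≅ ker (id_S ⊗ θ : S ⊗ E₋₁ → S ⊗ E₀)`. -/
theorem fibre_product_kernel_base_change {R S E₁ E₀ A : Type*} [CommRing R] [CommRing S]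
    [Algebra R S]
    [AddCommGroup E₁] [AddCommGroup E₀] [AddCommGroup A]
    [Module R E₁] [Module R E₀] [Module R A]
    [Module.Flat R E₁] [Module.Flat R E₀]
    (θ : E₁ →ₗ[R] E₀) (a : A →ₗ[R] E₀) (ha : Function.Surjective a) :
    let G : Submodule R (E₁ × A) :=
      LinearMap.ker (θ ∘ₗ LinearMap.fst R E₁ A - a ∘ₗ LinearMap.snd R E₁ A)
    let p : G →ₗ[R] E₁ := LinearMap.fst R E₁ A ∘ₗ G.subtype
    let θ' : G →ₗ[R] A := LinearMap.snd R E₁ A ∘ₗ G.subtype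
    ∃ e : LinearMap.ker (θ'.baseChange S) ≃ₗ[S] LinearMap.ker (θ.baseChange S),
      ∀ x : LinearMap.ker (θ'.baseChange S), (e x : S ⊗[R] E₁) = p.baseChange S x.1 :=
  fibre_product_kernel_base_change_general θ a ha
end

section
/- Let k be an infinite field, R a Noetherian commutative k-algebra, and M an invertible R-module (a finitely generated projective R-module of constant rank 1). Suppose m₁, …, m_n generate M as an R-module. Then there exist c₁, …, c_n ∈ k such that, setting m = c₁m₁ + ⋯ + c_n m_n, the R-module map R ⟶ M, x ↦ x·m, is injective. -/
/-!
A nonzero `x : R` stays nonzero in `R_p` for some associated prime `p` of `R` (any one containing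
`ann x`), and there are finitely many associated primes. At each of them `M_p` is free of positive
rank, so a coordinate `ψ_p : M → R_p` sends the generators `mᵢ` to a generating set of `R_p`, and
the `c` with `∑ cᵢ ψ_p(mᵢ)` in the maximal ideal form a proper `k`-subspace. Since `k` is infinite,
some `c` avoids all of these subspaces; then `ψ_p(∑ cᵢ mᵢ)` is a unit for every associated prime
`p`, so `x • ∑ cᵢ mᵢ = 0` forces `x = 0`.
-/

open IsLocalRing

theorem Subspace.exists_forall_notMem_of_ne_top {k E ι : Type*} [DivisionRing k] [Infinite k]
    [AddCommGroup E] [Module k E] [Finite ι] {p : ι → Subspace k E} (hp : ∀ i, p i ≠ ⊤) :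
    ∃ x, ∀ i, x ∉ p i := by
  by_contra! hcovers
  obtain ⟨i, hi⟩ := Subspace.exists_eq_top_of_iUnion_eq_univ <|
    Set.eq_univ_of_forall fun x => Set.mem_iUnion.mpr (hcovers x)
  exact hp i hi

theorem exists_subspace_ne_top_isUnit_sum_smul {k A ι : Type*} [Field k] [CommRing A]
    [IsLocalRing A] [Algebra k A] [Fintype ι] (a : ι → A) (ha : Ideal.span (Set.range a) = ⊤) :
    ∃ B : Subspace k (ι → k), B ≠ ⊤ ∧ ∀ c ∉ B, IsUnit (∑ i, c i • a i) := by
  classical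
  let L : (ι → k) →ₗ[k] A := Fintype.linearCombination k a
  refine ⟨(maximalIdeal A).restrictScalars k |>.comap L, fun htop => ?_, fun c hc => ?_⟩
  · have hsingle (i : ι) : a i ∈ maximalIdeal A := by
      simpa [L, Fintype.linearCombination_apply_single] using
        htop.ge (Submodule.mem_top (x := Pi.single i 1))
    refine (maximalIdeal.isMaximal A).ne_top (top_le_iff.mp ?_)
    exact ha ▸ Ideal.span_le.mpr (Set.range_subset_iff.mpr hsingle)
  · simpa [L, Fintype.linearCombination_apply] using notMem_maximalIdeal.mp hc

theorem exists_linearMap_localization_span_eq_top {R M ι : Type*} [CommRing R]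
    [AddCommGroup M] [Module R M] [Module.Finite R M] [Module.Projective R M]
    (p : Ideal R) [p.IsPrime] (hp : Module.rankAtStalk M ⟨p, ‹_›⟩ ≠ 0)
    (m : ι → M) (hm : Submodule.span R (Set.range m) = ⊤) :
    ∃ ψ : M →ₗ[R] Localization.AtPrime p, Ideal.span (Set.range (ψ ∘ m)) = ⊤ := by
  have : Module.FinitePresentation R M := Module.finitePresentation_of_projective R M
  let Rp := Localization.AtPrime p
  let f := LocalizedModule.mkLinearMap p.primeCompl M
  have : Module.Free Rp (LocalizedModule p.primeCompl M) := Module.free_of_flat_of_isLocalRing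
  let b := Module.Free.chooseBasis Rp (LocalizedModule p.primeCompl M)
  obtain ⟨j⟩ : Nonempty (Module.Free.ChooseBasisIndex Rp (LocalizedModule p.primeCompl M)) := by
    rw [← Fintype.card_pos_iff, ← Module.finrank_eq_card_chooseBasisIndex]
    exact Nat.pos_of_ne_zero hp
  have hcoord : Function.Surjective (b.coord j) := fun r => ⟨r • b j, by simp⟩
  refine ⟨(b.coord j).restrictScalars R ∘ₗ f, ?_⟩
  rw [Set.range_comp, ← LinearMap.range_eq_top.mpr hcoord, LinearMap.range_eq_map,
    ← span_eq_top_of_isLocalizedModule Rp p.primeCompl f hm, Submodule.map_span,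
    ← Set.image_comp]
  rfl

theorem injective_smul_of_forall_associatedPrime {R M : Type*} [CommRing R] [IsNoetherianRing R]
    [AddCommGroup M] [Module R M] (m : M)
    (h : ∀ p : PrimeSpectrum R, p.asIdeal ∈ associatedPrimes R R →
      ∃ ψ : M →ₗ[R] Localization.AtPrime p.asIdeal, IsUnit (ψ m)) :
    Function.Injective fun x : R => x • m := by
  refine (injective_iff_map_eq_zero (LinearMap.toSpanSingleton R M m)).mpr fun x hx => ?_
  by_contra hx0
  obtain ⟨p, hp, hann⟩ := exists_le_isAssociatedPrime_of_isNoetherianRing R x hx0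
  have hp_prime := hp.isPrime
  obtain ⟨ψ, hψ⟩ := h ⟨p, hp_prime⟩ hp
  have hx_loc : algebraMap R (Localization.AtPrime p) x = 0 := by
    rw [← hψ.mul_left_eq_zero, ← Algebra.smul_def, ← map_smul,
      ← LinearMap.toSpanSingleton_apply, hx, map_zero]
  obtain ⟨⟨s, hs⟩, hsx⟩ := (IsLocalization.map_eq_zero_iff p.primeCompl _ x).mp hx_loc
  exact hs (hann (Submodule.mem_colon_singleton.mpr (by simpa using hsx)))

/-- Let `k` be an infinite field, `R` a Noetherian commutative `k`-algebra,
and `M` an invertible `R`-module (a finitely generated projective `R`-module of constant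
rank `1`). If `m₁, …, mₙ` generate `M` as an `R`-module, then there exist `c₁, …, cₙ ∈ k`
such that, setting `m = c₁ m₁ + ⋯ + cₙ mₙ`, the `R`-module map `R → M`, `x ↦ x • m`,
is injective. -/
theorem exists_regular_section {k R M : Type*} [Field k] [Infinite k]
    [CommRing R] [IsNoetherianRing R] [Algebra k R]
    [AddCommGroup M] [Module R M] [Module.Finite R M] [Module.Projective R M]
    (hrank : ∀ p : PrimeSpectrum R, Module.rankAtStalk M p = 1)
    (n : ℕ) (m : Fin n → M) (hgen : Submodule.span R (Set.range m) = ⊤) :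
    ∃ c : Fin n → k,
      Function.Injective fun x : R => x • (∑ i, algebraMap k R (c i) • m i) := by
  let S := {p : PrimeSpectrum R | p.asIdeal ∈ associatedPrimes R R}
  have : Finite S := (associatedPrimes.finite R R).preimage (fun _ _ _ _ => PrimeSpectrum.ext)
  choose ψ hψ using fun p : S =>
    exists_linearMap_localization_span_eq_top p.1.asIdeal (by simp [hrank]) m hgen
  choose B hB hunit using fun p : S => exists_subspace_ne_top_isUnit_sum_smul (k := k) _ (hψ p)
  obtain ⟨c, hc⟩ := Subspace.exists_forall_notMem_of_ne_top hB
  refine ⟨c, injective_smul_of_forall_associatedPrime _ fun p hp => ⟨ψ ⟨p, hp⟩, ?_⟩⟩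
  simpa [map_sum] using hunit ⟨p, hp⟩ c (hc _)
end
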